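/- Let E_1,…,E_r be CPTP maps on the d×d complex matrices admitting a common positive-definite fixed density matrix ρ. Then the intersection ⋂_{i=1}^r fix(E_i) is itself the fixed-point set of some CPTP map: there exists a CPTP map E with fix(E) = ⋂_{i=1}^r fix(E_i). Moreover this intersection contains ρ, is closed under adjoints and under the ρ-modified product (X,Y) ↦ X ρ^{−1} Y, and is invariant under the map X ↦ ρ^{1/2} X ρ^{−1/2}. -/

import Mathlib

open Matrix
open scoped ComplexOrder

/-- A map on `d × d` complex matrices is CPTP if it admits a Kraus (operator-sum)
representation `E(X) = ∑ k, M k * X * (M k)ᴴ` with `∑ k, (M k)ᴴ * M k = 1`. -/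
def IsCPTP {d : ℕ} (E : Matrix (Fin d) (Fin d) ℂ → Matrix (Fin d) (Fin d) ℂ) : Prop :=
  ∃ (m : ℕ) (M : Fin m → Matrix (Fin d) (Fin d) ℂ),
    (∀ X, E X = ∑ k, M k * X * (M k)ᴴ) ∧ (∑ k, (M k)ᴴ * M k = 1)

/-- The positive semidefinite square root of a positive semidefinite matrix, as defined in
Mathlib (December 2024) under this name (removed since). -/
noncomputable def Matrix.PosSemidef.sqrt {n 𝕜 : Type*} [Fintype n] [DecidableEq n] [RCLike 𝕜]
    {A : Matrix n n 𝕜} (hA : A.PosSemidef) : Matrix n n 𝕜 :=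
  hA.1.eigenvectorUnitary.1 * diagonal ((↑) ∘ (√·) ∘ hA.1.eigenvalues) *
    (star hA.1.eigenvectorUnitary : Matrix n n 𝕜)

/-!
Write each channel as `X ↦ ∑ₖ Mₖ X Mₖᴴ` with `∑ₖ Mₖᴴ Mₖ = 1`. For a fixed point `X` and
`W = X ρ⁻¹`, the positive semidefinite matrix `∑ₖ [Mₖ, W] ρ [Mₖ, W]ᴴ` equals `E(W ρ Wᴴ) - W ρ Wᴴ`,
so it has trace zero, and as `ρ` is positive definite `W` commutes with every `Mₖ`. Hence the fixed
points are exactly the `W ρ` with `W` in the commutant `𝒜` of the Kraus operators, and the common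
fixed points of the `Eᵢ` are those of their average, whose Kraus operators are the rescaled `Mᵢₖ`.

`𝒜` is an algebra, which gives closure under `(X, Y) ↦ X ρ⁻¹ Y`. Since `∑ₖ Mₖᴴ W Mₖ = W` for
`W ∈ 𝒜`, the same trace argument puts `Wᴴ` in `𝒜`; then `ρ W` is fixed, i.e. `ρ W ρ⁻¹ ∈ 𝒜`. In an
eigenbasis of `ρ`, conjugation by `ρ^{1/2}` multiplies the `(i, j)` entry by `√(λᵢ / λⱼ)`. An
interpolating polynomial `q` with `q (λᵢ / λⱼ) = √(λᵢ / λⱼ)` for all `i, j` writes this conjugation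
as `q` applied to conjugation by `ρ`, so `𝒜` is invariant under it too.
-/

open Polynomial Unitary

lemma Matrix.diagonal_mul_mul_diagonal_inv_eq_sum {n K : Type*} [Fintype n] [DecidableEq n]
    [Field K] (a b : n → K) (p : K[X]) (hp : ∀ i j, p.eval (b i / b j) = a i / a j)
    (Y : Matrix n n K) :
    diagonal a * Y * diagonal a⁻¹ =
      ∑ k ∈ Finset.range (p.natDegree + 1),
        p.coeff k • (diagonal b ^ k * Y * diagonal b⁻¹ ^ k) := by
  ext i j
  simp only [diagonal_pow, mul_diagonal, diagonal_mul, sum_apply, smul_apply, smul_eq_mul,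
    Pi.inv_apply, Pi.pow_apply]
  rw [mul_right_comm, ← div_eq_mul_inv, ← hp, eval_eq_sum_range, Finset.sum_mul]
  refine Finset.sum_congr rfl fun k _ => ?_
  rw [div_pow, inv_pow]
  ring

lemma Unitary.conjStarAlgAut_diagonal_inv {n 𝕜 : Type*} [Fintype n] [DecidableEq n] [RCLike 𝕜]
    (U : unitary (Matrix n n 𝕜)) {a : n → 𝕜} (ha : ∀ i, a i ≠ 0) :
    (conjStarAlgAut 𝕜 _ U (diagonal a))⁻¹ = conjStarAlgAut 𝕜 _ U (diagonal a⁻¹) := by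
  refine inv_eq_right_inv ?_
  rw [← map_mul, diagonal_mul_diagonal, ← map_one (conjStarAlgAut 𝕜 _ U), ← diagonal_one]
  congr 2
  ext i
  exact mul_inv_cancel₀ (ha i)

lemma Unitary.conjStarAlgAut_diagonal_mul_mul_inv_eq_sum {n 𝕜 : Type*} [Fintype n]
    [DecidableEq n] [RCLike 𝕜] (U : unitary (Matrix n n 𝕜)) {a b : n → 𝕜}
    (ha : ∀ i, a i ≠ 0) (hb : ∀ i, b i ≠ 0) (p : 𝕜[X])
    (hp : ∀ i j, p.eval (b i / b j) = a i / a j) (Z : Matrix n n 𝕜) :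
    conjStarAlgAut 𝕜 _ U (diagonal a) * Z * (conjStarAlgAut 𝕜 _ U (diagonal a))⁻¹ =
      ∑ k ∈ Finset.range (p.natDegree + 1), p.coeff k •
        (conjStarAlgAut 𝕜 _ U (diagonal b) ^ k * Z *
          (conjStarAlgAut 𝕜 _ U (diagonal b))⁻¹ ^ k) := by
  rw [conjStarAlgAut_diagonal_inv U ha, conjStarAlgAut_diagonal_inv U hb,
    ← (conjStarAlgAut 𝕜 _ U).apply_symm_apply Z]
  simp only [← map_pow, ← map_mul, ← map_smul, ← map_sum]
  rw [diagonal_mul_mul_diagonal_inv_eq_sum a b p hp]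

namespace Matrix.PosSemidef

variable {n 𝕜 : Type*} [Fintype n] [DecidableEq n] [RCLike 𝕜] {A : Matrix n n 𝕜}

lemma sqrt_eq_conjStarAlgAut (hA : A.PosSemidef) :
    hA.sqrt = conjStarAlgAut 𝕜 _ hA.1.eigenvectorUnitary
      (diagonal ((↑) ∘ (√·) ∘ hA.1.eigenvalues)) :=
  rfl

lemma sqrt_mul_self (hA : A.PosSemidef) : hA.sqrt * hA.sqrt = A := by
  conv_rhs => rw [hA.1.spectral_theorem]
  rw [sqrt_eq_conjStarAlgAut, ← map_mul, diagonal_mul_diagonal]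
  congr 2
  ext i
  simp [← RCLike.ofReal_mul, Real.mul_self_sqrt (hA.eigenvalues_nonneg i)]

lemma isHermitian_sqrt (hA : A.PosSemidef) : hA.sqrt.IsHermitian := by
  rw [IsHermitian, sqrt_eq_conjStarAlgAut, ← star_eq_conjTranspose, ← map_star,
    star_eq_conjTranspose, diagonal_conjTranspose]
  congr 2
  ext i
  simp

end Matrix.PosSemidef

namespace Matrix.PosDef

variable {m n 𝕜 : Type*} [Fintype m] [Fintype n] [DecidableEq n] [RCLike 𝕜] {ρ : Matrix n n 𝕜}

lemma isUnit_det_sqrt (hρ : ρ.PosDef) : IsUnit hρ.posSemidef.sqrt.det := by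
  have h := hρ.isUnit
  rw [← hρ.posSemidef.sqrt_mul_self] at h
  exact (isUnit_iff_isUnit_det _).mp (isUnit_of_mul_isUnit_left h)

lemma eq_zero_of_trace_mul_mul_conjTranspose_eq_zero (hρ : ρ.PosDef) {C : Matrix m n 𝕜}
    (h : (C * ρ * Cᴴ).trace = 0) : C = 0 := by
  set s := hρ.posSemidef.sqrt
  have hs : C * ρ * Cᴴ = C * s * (C * s)ᴴ := by
    rw [conjTranspose_mul, hρ.posSemidef.isHermitian_sqrt.eq, Matrix.mul_assoc C s,
      ← Matrix.mul_assoc s, hρ.posSemidef.sqrt_mul_self, Matrix.mul_assoc]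
  rw [hs, trace_mul_conjTranspose_self_eq_zero_iff] at h
  rw [← mul_nonsing_inv_cancel_right C (A := s) hρ.isUnit_det_sqrt, h, Matrix.zero_mul]

lemma exists_sqrt_mul_mul_inv_eq_sum (hρ : ρ.PosDef) : ∃ p : 𝕜[X], ∀ Z : Matrix n n 𝕜,
    hρ.posSemidef.sqrt * Z * hρ.posSemidef.sqrt⁻¹ =
      ∑ k ∈ Finset.range (p.natDegree + 1), p.coeff k • (ρ ^ k * Z * ρ⁻¹ ^ k) := by
  have he : ∀ i, 0 < hρ.posSemidef.1.eigenvalues i := hρ.eigenvalues_pos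
  set e := hρ.posSemidef.1.eigenvalues
  obtain ⟨p, hp⟩ : ∃ p : 𝕜[X], ∀ i j, p.eval ((e i : 𝕜) / e j) = (√(e i) : 𝕜) / √(e j) := by
    set s := Finset.univ.image fun ij : n × n => (e ij.1 : 𝕜) / e ij.2
    refine ⟨Lagrange.interpolate s id fun z => ((√(RCLike.re z) : ℝ) : 𝕜), fun i j => ?_⟩
    have hij : (e i : 𝕜) / e j ∈ s := Finset.mem_image_of_mem _ (Finset.mem_univ (i, j))
    refine (Lagrange.eval_interpolate_at_node _ (Set.injOn_id _) hij).trans ?_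
    simp only [← RCLike.ofReal_div, RCLike.ofReal_re, Real.sqrt_div (he i).le]
  refine ⟨p, fun Z => ?_⟩
  have hconj := conjStarAlgAut_diagonal_mul_mul_inv_eq_sum hρ.posSemidef.1.eigenvectorUnitary
    (a := RCLike.ofReal ∘ (√·) ∘ e) (b := RCLike.ofReal ∘ e)
    (fun i => by simpa using Real.sqrt_ne_zero'.mpr (he i)) (fun i => by simpa using (he i).ne')
    p hp Z
  rwa [← hρ.posSemidef.1.spectral_theorem] at hconj

lemma sqrt_mul_mul_inv_mem (hρ : ρ.PosDef) {S : Submodule 𝕜 (Matrix n n 𝕜)}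
    (hS : ∀ W ∈ S, ρ * W * ρ⁻¹ ∈ S) {W : Matrix n n 𝕜} (hW : W ∈ S) :
    hρ.posSemidef.sqrt * W * hρ.posSemidef.sqrt⁻¹ ∈ S := by
  have hpow : ∀ k : ℕ, ρ ^ k * W * ρ⁻¹ ^ k ∈ S := by
    intro k
    induction k with
    | zero => simpa
    | succ k ih =>
      rw [pow_succ' ρ, pow_succ ρ⁻¹]
      simpa only [Matrix.mul_assoc] using hS _ ih
  obtain ⟨p, hp⟩ := hρ.exists_sqrt_mul_mul_inv_eq_sum
  rw [hp]
  exact S.sum_mem fun k _ => S.smul_mem _ (hpow k)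

lemma sqrt_mul_mul_inv_mul_inv (hρ : ρ.PosDef) (Z : Matrix n n 𝕜) :
    hρ.posSemidef.sqrt * Z * hρ.posSemidef.sqrt⁻¹ * ρ⁻¹ =
      hρ.posSemidef.sqrt * (Z * ρ⁻¹) * hρ.posSemidef.sqrt⁻¹ := by
  have h : ρ⁻¹ = hρ.posSemidef.sqrt⁻¹ * hρ.posSemidef.sqrt⁻¹ := by
    rw [← mul_inv_rev, hρ.posSemidef.sqrt_mul_self]
  rw [h]
  simp only [Matrix.mul_assoc]

end Matrix.PosDef

section Kraus

variable {n ι 𝕜 : Type*} [Fintype n] [Fintype ι] [RCLike 𝕜]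

def krausMap (M : ι → Matrix n n 𝕜) (X : Matrix n n 𝕜) : Matrix n n 𝕜 :=
  ∑ k, M k * X * (M k)ᴴ

lemma krausMap_conjTranspose (M : ι → Matrix n n 𝕜) (X : Matrix n n 𝕜) :
    krausMap M Xᴴ = (krausMap M X)ᴴ := by
  simp only [krausMap, conjTranspose_sum, conjTranspose_mul, conjTranspose_conjTranspose,
    Matrix.mul_assoc]

lemma trace_krausMap_mul (M : ι → Matrix n n 𝕜) (A B : Matrix n n 𝕜) :
    (krausMap M A * B).trace = (A * ∑ k, (M k)ᴴ * B * M k).trace := by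
  simp only [krausMap, Finset.sum_mul, Finset.mul_sum, trace_sum]
  refine Finset.sum_congr rfl fun k _ => ?_
  rw [Matrix.mul_assoc, Matrix.mul_assoc, trace_mul_comm]
  simp only [Matrix.mul_assoc]

lemma sum_commutator_mul_mul_conjTranspose (M : ι → Matrix n n 𝕜) (W ρ : Matrix n n 𝕜) :
    ∑ k, (M k * W - W * M k) * ρ * (M k * W - W * M k)ᴴ =
      krausMap M (W * ρ * Wᴴ) - krausMap M (W * ρ) * Wᴴ - W * krausMap M (ρ * Wᴴ) +
        W * krausMap M ρ * Wᴴ := by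
  simp only [krausMap, conjTranspose_sub, conjTranspose_mul, sub_mul, mul_sub,
    Finset.sum_sub_distrib, Finset.mul_sum, Finset.sum_mul, Matrix.mul_assoc]
  abel

variable [DecidableEq n]

lemma krausMap_mul_of_mem_centralizer (M : ι → Matrix n n 𝕜) {W : Matrix n n 𝕜}
    (hW : W ∈ Subalgebra.centralizer 𝕜 (Set.range M)) (Y : Matrix n n 𝕜) :
    krausMap M (W * Y) = W * krausMap M Y := by
  rw [Subalgebra.mem_centralizer_iff, Set.forall_mem_range] at hW
  simp only [krausMap, Finset.mul_sum, ← Matrix.mul_assoc, hW]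

variable {M : ι → Matrix n n 𝕜}

lemma trace_krausMap (hTP : ∑ k, (M k)ᴴ * M k = 1) (A : Matrix n n 𝕜) :
    (krausMap M A).trace = A.trace := by
  simpa [hTP] using trace_krausMap_mul M A 1

lemma sum_conjTranspose_mul_mul_of_mem_centralizer (hTP : ∑ k, (M k)ᴴ * M k = 1)
    {W : Matrix n n 𝕜} (hW : W ∈ Subalgebra.centralizer 𝕜 (Set.range M)) :
    ∑ k, (M k)ᴴ * W * M k = W := by
  rw [Subalgebra.mem_centralizer_iff, Set.forall_mem_range] at hW
  calc ∑ k, (M k)ᴴ * W * M k = ∑ k, (M k)ᴴ * M k * W := Finset.sum_congr rfl fun k _ => by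
        rw [Matrix.mul_assoc, ← hW, ← Matrix.mul_assoc]
    _ = W := by rw [← Finset.sum_mul, hTP, Matrix.one_mul]

variable {ρ : Matrix n n 𝕜}

lemma mem_centralizer_of_trace_krausMap_mul (hTP : ∑ k, (M k)ᴴ * M k = 1) (hρ : ρ.PosDef)
    (hρM : krausMap M ρ = ρ) {W : Matrix n n 𝕜}
    (h : (krausMap M (W * ρ) * Wᴴ).trace = (W * ρ * Wᴴ).trace) :
    W ∈ Subalgebra.centralizer 𝕜 (Set.range M) := by
  -- `W * krausMap M (ρ * Wᴴ)` is the adjoint of `krausMap M (W * ρ) * Wᴴ`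
  have h' : (W * krausMap M (ρ * Wᴴ)).trace = (W * ρ * Wᴴ).trace := by
    rw [← hρ.1.eq, ← conjTranspose_mul, krausMap_conjTranspose, ← conjTranspose_conjTranspose W,
      ← conjTranspose_mul, trace_conjTranspose, conjTranspose_conjTranspose, h,
      ← trace_conjTranspose]
    simp only [conjTranspose_mul, conjTranspose_conjTranspose, Matrix.mul_assoc]
  have hsum : ∑ k, ((M k * W - W * M k) * ρ * (M k * W - W * M k)ᴴ).trace = 0 := by
    rw [← trace_sum, sum_commutator_mul_mul_conjTranspose, trace_add, trace_sub, trace_sub,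
      trace_krausMap hTP, h, h', hρM]
    ring
  rw [Finset.sum_eq_zero_iff_of_nonneg fun k _ =>
    (hρ.posSemidef.mul_mul_conjTranspose_same _).trace_nonneg] at hsum
  rw [Subalgebra.mem_centralizer_iff, Set.forall_mem_range]
  exact fun k => sub_eq_zero.mp
    (hρ.eq_zero_of_trace_mul_mul_conjTranspose_eq_zero (hsum k (Finset.mem_univ k)))

lemma krausMap_eq_self_iff (hTP : ∑ k, (M k)ᴴ * M k = 1) (hρ : ρ.PosDef)
    (hρM : krausMap M ρ = ρ) (X : Matrix n n 𝕜) :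
    krausMap M X = X ↔ X * ρ⁻¹ ∈ Subalgebra.centralizer 𝕜 (Set.range M) := by
  have hX : X * ρ⁻¹ * ρ = X :=
    nonsing_inv_mul_cancel_right ρ X ((isUnit_iff_isUnit_det ρ).mp hρ.isUnit)
  refine ⟨fun hfix => mem_centralizer_of_trace_krausMap_mul hTP hρ hρM ?_, fun hW => ?_⟩
  · rw [hX, hfix]
  · rw [← hX, krausMap_mul_of_mem_centralizer M hW, hρM]

lemma conjTranspose_mem_centralizer (hTP : ∑ k, (M k)ᴴ * M k = 1) (hρ : ρ.PosDef)
    (hρM : krausMap M ρ = ρ) {W : Matrix n n 𝕜}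
    (hW : W ∈ Subalgebra.centralizer 𝕜 (Set.range M)) :
    Wᴴ ∈ Subalgebra.centralizer 𝕜 (Set.range M) := by
  refine mem_centralizer_of_trace_krausMap_mul hTP hρ hρM ?_
  rw [conjTranspose_conjTranspose, trace_krausMap_mul,
    sum_conjTranspose_mul_mul_of_mem_centralizer hTP hW]

lemma mul_mul_inv_mem_centralizer (hTP : ∑ k, (M k)ᴴ * M k = 1) (hρ : ρ.PosDef)
    (hρM : krausMap M ρ = ρ) {W : Matrix n n 𝕜}
    (hW : W ∈ Subalgebra.centralizer 𝕜 (Set.range M)) :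
    ρ * W * ρ⁻¹ ∈ Subalgebra.centralizer 𝕜 (Set.range M) := by
  have hρW : ρ * W = (Wᴴ * ρ)ᴴ := by
    rw [conjTranspose_mul, hρ.1.eq, conjTranspose_conjTranspose]
  rw [← krausMap_eq_self_iff hTP hρ hρM, hρW, krausMap_conjTranspose,
    krausMap_mul_of_mem_centralizer M (conjTranspose_mem_centralizer hTP hρ hρM hW), hρM]

end Kraus

section Average

variable {n κ 𝕜 : Type*} [Fintype κ] [RCLike 𝕜] {ι : κ → Type*}

lemma inv_card_smul_sum_const {E : Type*} [AddCommGroup E] [Module ℝ E] [Nonempty κ] (Y : E) :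
    (Fintype.card κ : ℝ)⁻¹ • ∑ _i : κ, Y = Y := by
  rw [Finset.sum_const, Finset.card_univ, ← Nat.cast_smul_eq_nsmul ℝ, smul_smul,
    inv_mul_cancel₀ (by positivity), one_smul]

noncomputable def averageKraus (M : (i : κ) → ι i → Matrix n n 𝕜) (p : (i : κ) × ι i) :
    Matrix n n 𝕜 :=
  (√(Fintype.card κ : ℝ))⁻¹ • M p.1 p.2

variable [Fintype n] {M : (i : κ) → ι i → Matrix n n 𝕜}

lemma mem_centralizer_averageKraus_iff [DecidableEq n] [Nonempty κ] {W : Matrix n n 𝕜} :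
    W ∈ Subalgebra.centralizer 𝕜 (Set.range (averageKraus M)) ↔
      ∀ i, W ∈ Subalgebra.centralizer 𝕜 (Set.range (M i)) := by
  have hc : (√(Fintype.card κ : ℝ))⁻¹ ≠ 0 := by positivity
  simp only [Subalgebra.mem_centralizer_iff, Set.forall_mem_range, Sigma.forall, averageKraus,
    smul_mul_assoc, mul_smul_comm, smul_right_inj hc]

variable [∀ i, Fintype (ι i)]

lemma krausMap_averageKraus (X : Matrix n n 𝕜) :
    krausMap (averageKraus M) X = (Fintype.card κ : ℝ)⁻¹ • ∑ i, krausMap (M i) X := by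
  simp only [krausMap, averageKraus, Fintype.sum_sigma, conjTranspose_smul, star_trivial,
    smul_mul_assoc, mul_smul_comm, smul_smul, ← Finset.smul_sum, ← mul_inv,
    Real.mul_self_sqrt (Nat.cast_nonneg _)]

lemma krausMap_averageKraus_eq_self [Nonempty κ] {X : Matrix n n 𝕜}
    (h : ∀ i, krausMap (M i) X = X) : krausMap (averageKraus M) X = X := by
  simp only [krausMap_averageKraus, h, inv_card_smul_sum_const]

lemma sum_conjTranspose_mul_averageKraus [DecidableEq n] [Nonempty κ]
    (hTP : ∀ i, ∑ k, (M i k)ᴴ * M i k = 1) :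
    ∑ p, (averageKraus M p)ᴴ * averageKraus M p = 1 := by
  simp only [averageKraus, Fintype.sum_sigma, conjTranspose_smul, star_trivial,
    smul_mul_assoc, mul_smul_comm, smul_smul, ← Finset.smul_sum, ← mul_inv,
    Real.mul_self_sqrt (Nat.cast_nonneg _), hTP, inv_card_smul_sum_const]

end Average

lemma isCPTP_krausMap {d : ℕ} {ι : Type*} [Fintype ι] (M : ι → Matrix (Fin d) (Fin d) ℂ)
    (hTP : ∑ k, (M k)ᴴ * M k = 1) : IsCPTP (krausMap M) :=
  ⟨Fintype.card ι, M ∘ (Fintype.equivFin ι).symm,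
    fun X => ((Fintype.equivFin ι).symm.sum_comp fun k => M k * X * (M k)ᴴ).symm,
    ((Fintype.equivFin ι).symm.sum_comp fun k => (M k)ᴴ * M k).trans hTP⟩

lemma isCPTP_id {d : ℕ} : IsCPTP (id : Matrix (Fin d) (Fin d) ℂ → Matrix (Fin d) (Fin d) ℂ) :=
  ⟨1, fun _ => 1, fun X => by simp, by simp⟩

theorem intersection_of_fixed_point_sets_is_fixed_point_set_general {d r : ℕ}
    (E : Fin r → (Matrix (Fin d) (Fin d) ℂ → Matrix (Fin d) (Fin d) ℂ))
    (hE : ∀ i, IsCPTP (E i))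
    (ρ : Matrix (Fin d) (Fin d) ℂ) (hρ : ρ.PosDef)
    (hfixρ : ∀ i, E i ρ = ρ) :
    (∃ F : Matrix (Fin d) (Fin d) ℂ → Matrix (Fin d) (Fin d) ℂ,
      IsCPTP F ∧ ∀ X, (F X = X ↔ ∀ i, E i X = X)) ∧
    (∀ i, E i ρ = ρ) ∧
    (∀ X, (∀ i, E i X = X) → ∀ i, E i Xᴴ = Xᴴ) ∧
    (∀ X Y, (∀ i, E i X = X) → (∀ i, E i Y = Y) →
      ∀ i, E i (X * ρ⁻¹ * Y) = X * ρ⁻¹ * Y) ∧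
    (∀ X, (∀ i, E i X = X) →
      ∀ i, E i (hρ.posSemidef.sqrt * X * (hρ.posSemidef.sqrt)⁻¹)
          = hρ.posSemidef.sqrt * X * (hρ.posSemidef.sqrt)⁻¹) := by
  choose m M hE_apply hTP using hE
  have hE_eq : ∀ i, E i = krausMap (M i) := fun i => funext (hE_apply i)
  simp only [hE_eq] at hfixρ ⊢
  have hfix : ∀ X, (∀ i, krausMap (M i) X = X) ↔
      ∀ i, X * ρ⁻¹ ∈ Subalgebra.centralizer ℂ (Set.range (M i)) := fun X =>
    forall_congr' fun i => krausMap_eq_self_iff (hTP i) hρ (hfixρ i) X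
  refine ⟨?_, hfixρ, fun X hX i => by rw [krausMap_conjTranspose, hX], fun X Y hX hY => ?_,
    fun X hX => ?_⟩
  · rcases isEmpty_or_nonempty (Fin r) with hr | hr
    · exact ⟨id, isCPTP_id, fun X => by simp⟩
    have hTPavg := sum_conjTranspose_mul_averageKraus hTP
    refine ⟨krausMap (averageKraus M), isCPTP_krausMap _ hTPavg, fun X => ?_⟩
    rw [hfix, krausMap_eq_self_iff hTPavg hρ (krausMap_averageKraus_eq_self hfixρ),
      mem_centralizer_averageKraus_iff]
  · rw [hfix] at hX hY ⊢
    intro i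
    rw [Matrix.mul_assoc (X * ρ⁻¹)]
    exact mul_mem (hX i) (hY i)
  · rw [hfix] at hX ⊢
    intro i
    rw [hρ.sqrt_mul_mul_inv_mul_inv]
    exact hρ.sqrt_mul_mul_inv_mem (S := (Subalgebra.centralizer ℂ (Set.range (M i))).toSubmodule)
      (fun W hW => mul_mul_inv_mem_centralizer (hTP i) hρ (hfixρ i) hW) (hX i)

/-- For CPTP maps `E 1, …, E r` with a common positive-definite fixed density matrix `ρ`,
the intersection `⋂ i, fix(E i)` is itself the fixed-point set of some CPTP map; moreover
it contains `ρ`, is closed under adjoints and the `ρ`-modified product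
`(X,Y) ↦ X ρ⁻¹ Y`, and is invariant under `X ↦ ρ^{1/2} X ρ^{-1/2}`. -/
theorem intersection_of_fixed_point_sets_is_fixed_point_set {d r : ℕ}
    (E : Fin r → (Matrix (Fin d) (Fin d) ℂ → Matrix (Fin d) (Fin d) ℂ))
    (hE : ∀ i, IsCPTP (E i))
    (ρ : Matrix (Fin d) (Fin d) ℂ) (hρ : ρ.PosDef) (hρtr : ρ.trace = 1)
    (hfixρ : ∀ i, E i ρ = ρ) :
    (∃ F : Matrix (Fin d) (Fin d) ℂ → Matrix (Fin d) (Fin d) ℂ,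
      IsCPTP F ∧ ∀ X, (F X = X ↔ ∀ i, E i X = X)) ∧
    (∀ i, E i ρ = ρ) ∧
    (∀ X, (∀ i, E i X = X) → ∀ i, E i Xᴴ = Xᴴ) ∧
    (∀ X Y, (∀ i, E i X = X) → (∀ i, E i Y = Y) →
      ∀ i, E i (X * ρ⁻¹ * Y) = X * ρ⁻¹ * Y) ∧
    (∀ X, (∀ i, E i X = X) →
      ∀ i, E i (hρ.posSemidef.sqrt * X * (hρ.posSemidef.sqrt)⁻¹)
          = hρ.posSemidef.sqrt * X * (hρ.posSemidef.sqrt)⁻¹) :=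
  intersection_of_fixed_point_sets_is_fixed_point_set_general E hE ρ hρ hfixρ
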